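/- arXiv:1703.10707 — 2 statements merged into one kernel-verified Lean document; each statement's English description precedes it below -/
import Mathlib

section
/- Fix A > 0, a < b, λ = π/(b-a), constants ε ∈ (0, π) and c > Aλπ + λ². Then the function φ(x,t) = ε·e^{-ct}·sin(λ(x-a)) satisfies φ_t - cos²(φ)·φ_xx - A·sin(φ)·φ_x ≤ 0 for all x ∈ [a,b] and t ≥ 0. -/
/-!
Write `θ = φ(x,t) = E sin(λ(x-a))` with `E = εe^{-ct}`. Then `φ_t = -cθ` and `φ_xx = -λ²θ`, and
on `[a,b]` the phase `λ(x-a)` lies in `[0,π]`, so `0 ≤ θ ≤ E < π`. Hence `cos²θ ≤ 1`,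
`0 ≤ sin θ ≤ θ` and `|A sin θ · φ_x| ≤ Aλπθ`, which bounds the residual by `(λ² + Aλπ - c)θ ≤ 0`.
-/

open Real

lemma deriv_const_mul_exp_neg_mul_mul (K c S t : ℝ) :
    deriv (fun s => K * exp (-c * s) * S) t = -c * (K * exp (-c * t) * S) := by
  have h := ((((hasDerivAt_id t).const_mul (-c)).exp).const_mul K).mul_const S
  refine h.deriv.trans ?_
  simp only [id, mul_one]
  ring

lemma hasDerivAt_const_mul_sin_mul_sub (K lam a y : ℝ) :
    HasDerivAt (fun z => K * sin (lam * (z - a))) (K * lam * cos (lam * (y - a))) y := by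
  have h := ((((hasDerivAt_id y).sub_const a).const_mul lam).sin).const_mul K
  refine h.congr_deriv ?_
  simp only [id, mul_one]
  ring

lemma hasDerivAt_const_mul_cos_mul_sub (K lam a y : ℝ) :
    HasDerivAt (fun z => K * cos (lam * (z - a))) (-(K * lam) * sin (lam * (y - a))) y := by
  have h := ((((hasDerivAt_id y).sub_const a).const_mul lam).cos).const_mul K
  refine h.congr_deriv ?_
  simp only [id, mul_one]
  ring

lemma deriv_deriv_const_mul_sin_mul_sub (K lam a y : ℝ) :
    deriv (fun x => deriv (fun z => K * sin (lam * (z - a))) x) y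
      = -lam ^ 2 * (K * sin (lam * (y - a))) := by
  have h : (fun x => deriv (fun z => K * sin (lam * (z - a))) x)
      = fun x => K * lam * cos (lam * (x - a)) :=
    funext fun x => (hasDerivAt_const_mul_sin_mul_sub K lam a x).deriv
  rw [h, (hasDerivAt_const_mul_cos_mul_sub (K * lam) lam a y).deriv]
  ring

lemma angle_residual_nonpos {A c lam E θ co : ℝ} (hA : 0 ≤ A) (hlam : 0 ≤ lam) (hθ : 0 ≤ θ)
    (hθE : θ ≤ E) (hEπ : E ≤ π) (hco : |co| ≤ 1) (hc : A * lam * π + lam ^ 2 ≤ c) :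
    -c * θ - cos θ ^ 2 * (-lam ^ 2 * θ) - A * sin θ * (E * lam * co) ≤ 0 := by
  have hsin : |sin θ| ≤ θ := by
    rw [abs_of_nonneg (sin_nonneg_of_nonneg_of_le_pi hθ (hθE.trans hEπ))]
    exact sin_le hθ
  have hdrift : |A * sin θ * (E * lam * co)| ≤ A * lam * π * θ := by
    have hE : |E| ≤ π := by rw [abs_of_nonneg (hθ.trans hθE)]; exact hEπ
    calc |A * sin θ * (E * lam * co)| = A * lam * (|sin θ| * |E| * |co|) := by
          simp only [abs_mul, abs_of_nonneg hA, abs_of_nonneg hlam]; ring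
      _ ≤ A * lam * (θ * π * 1) := by gcongr
      _ = A * lam * π * θ := by ring
  have hdiff : cos θ ^ 2 * (lam ^ 2 * θ) ≤ lam ^ 2 * θ :=
    mul_le_of_le_one_left (by positivity) (cos_sq_le_one θ)
  nlinarith [neg_abs_le (A * sin θ * (E * lam * co)), mul_le_mul_of_nonneg_right hc hθ]

/-- `φ(x,t) = ε e^{-ct} sin(λ(x-a))` with `λ = π/(b-a)`, `ε ∈ (0,π)`,
`c > Aλπ + λ²`, is a subsolution of the angle equation
`θ_t = cos²θ·θ_xx + A sinθ·θ_x` on `[a,b] × [0,∞)`. -/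
theorem stmt_6 (A a b ε c lam : ℝ) (hA : 0 < A) (hab : a < b)
    (hlam : lam = Real.pi / (b - a))
    (hε : 0 < ε) (hεπ : ε < Real.pi)
    (hc : A * lam * Real.pi + lam ^ 2 < c)
    (φ : ℝ → ℝ → ℝ)
    (hφ : φ = fun x t => ε * Real.exp (-c * t) * Real.sin (lam * (x - a))) :
    ∀ x ∈ Set.Icc a b, ∀ t : ℝ, 0 ≤ t →
      deriv (fun s => φ x s) t
        - (Real.cos (φ x t)) ^ 2 * deriv (fun y => deriv (fun z => φ z t) y) x
        - A * Real.sin (φ x t) * deriv (fun y => φ y t) x ≤ 0 := by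
  subst hφ
  rintro x ⟨hax, hxb⟩ t ht
  have hlam0 : 0 < lam := hlam ▸ div_pos pi_pos (sub_pos.2 hab)
  have hphase : lam * (x - a) ≤ π := by
    calc lam * (x - a) ≤ lam * (b - a) := by gcongr
      _ = π := by rw [hlam]; field_simp [(sub_pos.2 hab).ne']
  have hphase0 : 0 ≤ lam * (x - a) := mul_nonneg hlam0.le (sub_nonneg.2 hax)
  have hc0 : 0 < c := by nlinarith [mul_pos (mul_pos hA hlam0) pi_pos]
  set E := ε * exp (-c * t)
  have hE0 : 0 ≤ E := by positivity
  have hEε : E ≤ ε := mul_le_of_le_one_right hε.le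
    (exp_le_one_iff.2 (mul_nonpos_of_nonpos_of_nonneg (neg_nonpos.2 hc0.le) ht))
  rw [deriv_const_mul_exp_neg_mul_mul, deriv_deriv_const_mul_sin_mul_sub,
    (hasDerivAt_const_mul_sin_mul_sub E lam a x).deriv]
  exact angle_residual_nonpos hA.le hlam0.le
    (mul_nonneg hE0 (sin_nonneg_of_nonneg_of_le_pi hphase0 hphase))
    (mul_le_of_le_one_right hE0 (sin_le_one _)) (hEε.trans hεπ.le) (abs_cos_le_one _) hc.le
end

section
/- Let V be a compact metric space and v : V × (0,T) → ℝ be continuous, with t ↦ v(x,t) differentiable for each x, and ∂v/∂t continuous on V × (0,T). Define m(t) = max_{x ∈ V} v(x,t). Then m is locally Lipschitz on (0,T), and for almost every t ∈ (0,T) there exists P_t ∈ V with v(P_t, t) = m(t) and m'(t) = v_t(P_t, t). -/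
open Set MeasureTheory

/-- Key lemma: `m` is Lipschitz on any `Icc a b ⊆ Ioo 0 T`. -/
lemma ham_lip {V : Type*} [MetricSpace V] [CompactSpace V] [Nonempty V]
    (T : ℝ) (v vt : V → ℝ → ℝ)
    (hvt : ∀ x : V, ∀ t ∈ Set.Ioo (0:ℝ) T, HasDerivAt (v x) (vt x t) t)
    (hvtc : ContinuousOn (fun p : V × ℝ => vt p.1 p.2) (Set.univ ×ˢ Set.Ioo 0 T))
    (m : ℝ → ℝ)
    (hm : ∀ t ∈ Set.Ioo (0:ℝ) T, IsGreatest (Set.range fun x => v x t) (m t))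
    {a b : ℝ} (ha : 0 < a) (hb : b < T) :
    ∃ K : NNReal, LipschitzOnWith K m (Set.Icc a b) := by
  have hsub : Set.Icc a b ⊆ Set.Ioo 0 T := fun s hs => ⟨lt_of_lt_of_le ha hs.1, lt_of_le_of_lt hs.2 hb⟩
  have hcomp : IsCompact ((Set.univ : Set V) ×ˢ Set.Icc a b) :=
    isCompact_univ.prod isCompact_Icc
  obtain ⟨C, hC⟩ := hcomp.exists_bound_of_continuousOn
    (hvtc.mono (Set.prod_mono subset_rfl hsub))
  set K : NNReal := C.toNNReal with hK
  have hCK : C ≤ (K : ℝ) := Real.le_coe_toNNReal C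
  refine ⟨K, ?_⟩
  -- each v x is K-Lipschitz on Icc a b
  have hxlip : ∀ x : V, LipschitzOnWith K (v x) (Set.Icc a b) := by
    intro x
    apply (convex_Icc a b).lipschitzOnWith_of_nnnorm_hasDerivWithin_le
      (f' := fun s => vt x s)
    · intro s hs
      exact ((hvt x s (hsub hs)).hasDerivWithinAt)
    · intro s hs
      have := hC (x, s) ⟨Set.mem_univ x, hs⟩
      rw [← NNReal.coe_le_coe]
      exact le_trans this hCK
  apply LipschitzOnWith.of_dist_le_mul
  intro s hs s' hs'
  have key : ∀ u ∈ Set.Icc a b, ∀ u' ∈ Set.Icc a b, m u - m u' ≤ K * dist u u' := by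
    intro u hu u' hu'
    obtain ⟨P, hP⟩ := (hm u (hsub hu)).1
    have h1 : v P u' ≤ m u' := (hm u' (hsub hu')).2 ⟨P, rfl⟩
    have h2 : dist (v P u) (v P u') ≤ K * dist u u' := (hxlip P).dist_le_mul u hu u' hu'
    rw [Real.dist_eq] at h2
    have h3 : v P u - v P u' ≤ K * dist u u' := le_trans (le_abs_self _) h2
    rw [← hP]
    linarith
  rw [Real.dist_eq, abs_sub_le_iff]
  constructor
  · exact le_trans (key s hs s' hs') (le_of_eq rfl)
  · have := key s' hs' s hs; rw [dist_comm] at this; exact this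


/-- Hamilton's trick: for a compact family, `m(t) = max_x v(x,t)` is locally Lipschitz
and for a.e. `t` there is a maximizer `P_t` with `m'(t) = v_t(P_t,t)`. -/
theorem stmt_9 {V : Type*} [MetricSpace V] [CompactSpace V] [Nonempty V]
    (T : ℝ) (hT : 0 < T) (v vt : V → ℝ → ℝ)
    (hv : ContinuousOn (fun p : V × ℝ => v p.1 p.2) (Set.univ ×ˢ Set.Ioo 0 T))
    (hvt : ∀ x : V, ∀ t ∈ Set.Ioo (0:ℝ) T, HasDerivAt (v x) (vt x t) t)
    (hvtc : ContinuousOn (fun p : V × ℝ => vt p.1 p.2) (Set.univ ×ˢ Set.Ioo 0 T))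
    (m : ℝ → ℝ)
    (hm : ∀ t ∈ Set.Ioo (0:ℝ) T, IsGreatest (Set.range fun x => v x t) (m t)) :
    (∀ t ∈ Set.Ioo (0:ℝ) T, ∃ εr > 0, ∃ K : NNReal,
      LipschitzOnWith K m (Metric.ball t εr ∩ Set.Ioo 0 T)) ∧
    (∀ᵐ t ∂(MeasureTheory.volume.restrict (Set.Ioo 0 T)),
      ∃ P : V, v P t = m t ∧ HasDerivAt m (vt P t) t) := by
  constructor
  · intro t ht
    set εr := min t (T - t) / 2 with hεr
    have hε0 : 0 < εr := by
      have := ht.1; have := ht.2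
      apply div_pos (lt_min (by linarith) (by linarith)) two_pos
    have hεt : εr < t := by
      have h1 : εr ≤ t / 2 := by
        apply div_le_div_of_nonneg_right (min_le_left _ _) (by norm_num)
      linarith [ht.1]
    have hεT : t + εr < T := by
      have h1 : εr ≤ (T - t) / 2 := by
        apply div_le_div_of_nonneg_right (min_le_right _ _) (by norm_num)
      linarith [ht.2]
    obtain ⟨K, hK⟩ := ham_lip T v vt hvt hvtc m hm (a := t - εr) (b := t + εr)
      (by linarith) (by linarith)
    refine ⟨εr, hε0, K, hK.mono ?_⟩
    intro s hs
    have := hs.1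
    rw [Metric.mem_ball, Real.dist_eq, abs_lt] at this
    exact ⟨by linarith [this.1], by linarith [this.2]⟩
  · -- a.e. differentiability + maximizer
    rw [MeasureTheory.ae_restrict_iff' measurableSet_Ioo]
    -- Step A : a.e. t, t ∈ Ioo 0 T → DifferentiableAt ℝ m t
    have hdiff : ∀ᵐ t ∂(MeasureTheory.volume : MeasureTheory.Measure ℝ),
        t ∈ Set.Ioo 0 T → DifferentiableAt ℝ m t := by
      have hn : ∀ n : ℕ, ∀ᵐ t ∂(MeasureTheory.volume : MeasureTheory.Measure ℝ),
          t ∈ Set.Ioo (T / (n + 2)) (T - T / (n + 2)) → DifferentiableAt ℝ m t := by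
        intro n
        have hpos : 0 < T / (n + 2) := by positivity
        obtain ⟨K, hK⟩ := ham_lip T v vt hvt hvtc m hm
          (a := T / (n + 2)) (b := T - T / (n + 2)) hpos (by linarith)
        filter_upwards [hK.ae_differentiableWithinAt_of_mem_of_real] with t h ht
        have h' := h (Set.mem_Icc_of_Ioo ht)
        exact h'.differentiableAt (Icc_mem_nhds ht.1 ht.2)
      rw [← MeasureTheory.ae_all_iff] at hn
      filter_upwards [hn] with t h ht
      have hmin : 0 < min t (T - t) := lt_min ht.1 (by linarith [ht.2])
      obtain ⟨n, hnn⟩ := exists_nat_gt (T / min t (T - t))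
      have hlt : T / (n + 2 : ℝ) < min t (T - t) := by
        rw [div_lt_iff₀ (by positivity)]
        rw [div_lt_iff₀ hmin] at hnn
        nlinarith [min_le_left t (T - t), min_le_right t (T - t)]
      exact h n ⟨lt_of_lt_of_le hlt (min_le_left _ _),
        by linarith [lt_of_lt_of_le hlt (min_le_right t (T - t))]⟩
    filter_upwards [hdiff] with t h ht
    have hd : DifferentiableAt ℝ m t := h ht
    obtain ⟨P, hP⟩ := (hm t ht).1
    refine ⟨P, hP, ?_⟩
    have hderiv : HasDerivAt m (deriv m t) t := hd.hasDerivAt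
    have hg : HasDerivAt (fun s => m s - v P s) (deriv m t - vt P t) t :=
      hderiv.sub (hvt P t ht)
    have hlm : IsLocalMin (fun s => m s - v P s) t := by
      filter_upwards [isOpen_Ioo.mem_nhds ht] with s hs
      have h1 : v P s ≤ m s := (hm s hs).2 ⟨P, rfl⟩
      simp only [hP, sub_self]
      linarith
    have hz : deriv m t - vt P t = 0 := hlm.hasDerivAt_eq_zero hg
    have : deriv m t = vt P t := by linarith
    rwa [this] at hderiv
end
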